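/- arXiv:1709.07423 — 4 statements merged into one kernel-verified Lean document; each statement's English description precedes it below -/
import Mathlib

section
/- Small Stinespring dilations imply small Schmidt rank: let a chain of finite-dimensional complex Hilbert spaces be grouped into four consecutive blocks α₂, α₁, β₁, β₂, with block Hilbert spaces H_{α₂}, H_{α₁}, H_{β₁}, H_{β₂} (each a tensor product of the site spaces in the block). Let φ_α ∈ H_{α₂} ⊗ H_{α₁} and φ_β ∈ H_{β₁} ⊗ H_{β₂} be vectors such that the Schmidt rank of φ_α across every contiguous cut of the chain α₂α₁, and of φ_β across every contiguous cut of the chain β₁β₂, is at most D. Let K₁, …, K_I be linear operators on H_{α₁} ⊗ H_{β₁} with Σ_{i=1}^{I} K_iᴴK_i = 1, set H_γ := ℂ^I with standard basis (e_i), and define V : H_{α₁} ⊗ H_{β₁} → H_{α₁} ⊗ H_γ ⊗ H_{β₁} by V u := Σ_{i=1}^{I} τ((K_i u) ⊗ e_i), where τ is the canonical reordering H_{α₁} ⊗ H_{β₁} ⊗ H_γ → H_{α₁} ⊗ H_γ ⊗ H_{β₁}. Then the vector Ψ := (1_{α₂} ⊗ V ⊗ 1_{β₂})(σ(φ_α ⊗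 φ_β)), where σ is the canonical reordering into H_{α₂} ⊗ (H_{α₁} ⊗ H_{β₁}) ⊗ H_{β₂}, has Schmidt rank at most D · dim(H_{α₁}) · dim(H_{β₁}) · I across every contiguous bipartite cut of the chain α₂ α₁ γ β₁ β₂ (where γ is a single site placed between α₁ and β₁). -/
open scoped Matrix

/-- The Schmidt rank of a vector in a tensor product of two Hilbert spaces `ℂ^α ⊗ ℂ^β`
(represented by its coordinates `x : α × β → ℂ`): the least number `r` of simple tensors
`v ⊗ w` (with coordinates `(a,b) ↦ v a * w b`) needed to write `x` as a sum of `r` of them. -/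
noncomputable def schmidtRank {α β : Type*} (x : α × β → ℂ) : ℕ :=
  sInf {r : ℕ | ∃ (v : Fin r → α → ℂ) (w : Fin r → β → ℂ),
    ∀ p : α × β, x p = ∑ k, v k p.1 * w k p.2}


lemma schmidtRank_eq_zero {α β : Type*} (x : α × β → ℂ) (h : IsEmpty (α × β)) :
    schmidtRank x = 0 :=
  Nat.eq_zero_of_le_zero (Nat.sInf_le ⟨fun k => k.elim0, fun k => k.elim0,
    fun p => isEmptyElim p⟩)

lemma schmidtRank_le_fintype {α β ι : Type*} [Fintype ι] (x : α × β → ℂ)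
    (v : ι → α → ℂ) (w : ι → β → ℂ)
    (h : ∀ p : α × β, x p = ∑ k, v k p.1 * w k p.2) :
    schmidtRank x ≤ Fintype.card ι := by
  refine Nat.sInf_le ⟨fun t => v ((Fintype.equivFin ι).symm t),
    fun t => w ((Fintype.equivFin ι).symm t), fun p => ?_⟩
  rw [h p]
  exact Fintype.sum_equiv (Fintype.equivFin ι) _ _ fun k => by simp

lemma schmidtRank_set_nonempty {α β : Type*} [Fintype α] (x : α × β → ℂ) :
    {r : ℕ | ∃ (v : Fin r → α → ℂ) (w : Fin r → β → ℂ),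
      ∀ p : α × β, x p = ∑ k, v k p.1 * w k p.2}.Nonempty := by
  classical
  refine ⟨Fintype.card α, fun t a => if (Fintype.equivFin α) a = t then 1 else 0,
    fun t b => x ((Fintype.equivFin α).symm t, b), fun p => ?_⟩
  simp only [ite_mul, one_mul, zero_mul]
  rw [Finset.sum_ite_eq]
  simp

lemma exists_decomp {α β : Type*} [Fintype α] {D : ℕ} (x : α × β → ℂ)
    (h : schmidtRank x ≤ D) :
    ∃ r ≤ D, ∃ (v : Fin r → α → ℂ) (w : Fin r → β → ℂ),
      ∀ p : α × β, x p = ∑ k, v k p.1 * w k p.2 :=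
  ⟨schmidtRank x, h, Nat.sInf_mem (schmidtRank_set_nonempty x)⟩

/-- **Small Stinespring dilations imply small Schmidt rank.**
A chain of `n` sites with site dimensions `d i` is grouped into four consecutive blocks
`α₂ = [0,a)`, `α₁ = [a,b)`, `β₁ = [b,c)`, `β₂ = [c,n)`; the block Hilbert spaces are the
tensor products of the site spaces, with standard basis indexed by configurations
(dependent functions on the sites of the block). `φ_α ∈ H_{α₂} ⊗ H_{α₁}` (a vector on the
sites `< b`) has Schmidt rank at most `D` across every contiguous cut of the chain `α₂α₁`,
and likewise `φ_β ∈ H_{β₁} ⊗ H_{β₂}` (a vector on the sites `≥ b`) across every contiguous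
cut of `β₁β₂`. The operators `K i` on `H_{α₁} ⊗ H_{β₁}` (matrices on configurations of the
sites in `[a,c)`) satisfy `∑ᵢ Kᵢᴴ Kᵢ = 1`, and `Ψ = (1_{α₂} ⊗ V ⊗ 1_{β₂})(φ_α ⊗ φ_β)` with
`V u = ∑ᵢ (Kᵢ u) ⊗ eᵢ : H_{α₁} ⊗ H_γ ⊗ H_{β₁}`, `H_γ = ℂ^I` a single new site placed
between `α₁` and `β₁` (the coordinates of `Ψ` are spelled out in `hΨ`). Then the Schmidt
rank of `Ψ` across every contiguous cut of the chain `α₂ α₁ γ β₁ β₂` is at most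
`D · dim H_{α₁} · dim H_{β₁} · I`; the cuts are parametrized by a position `k ≤ n` in the
original chain together with the side on which `γ` lies (`γ` on the right for `k ≤ b`,
`γ` on the left for `k ≥ b`). -/
theorem stinespring_small_schmidt_rank
    (n : ℕ) (d : Fin n → ℕ) (a b c : ℕ) (hab : a ≤ b) (hbc : b ≤ c) (hcn : c ≤ n)
    {I : ℕ} (D : ℕ)
    (φα : (∀ i : {i : Fin n // i.val < b}, Fin (d i.1)) → ℂ)
    (φβ : (∀ i : {i : Fin n // b ≤ i.val}, Fin (d i.1)) → ℂ)
    (hφα : ∀ k : ℕ, k ≤ b →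
      schmidtRank (fun p : (∀ i : {i : Fin n // i.val < k}, Fin (d i.1)) ×
          (∀ i : {i : Fin n // i.val < b ∧ ¬ i.val < k}, Fin (d i.1)) =>
        φα (fun j => if h : j.1.val < k then p.1 ⟨j.1, h⟩ else p.2 ⟨j.1, ⟨j.2, h⟩⟩)) ≤ D)
    (hφβ : ∀ k : ℕ, b ≤ k → k ≤ n →
      schmidtRank (fun p : (∀ i : {i : Fin n // b ≤ i.val ∧ i.val < k}, Fin (d i.1)) ×
          (∀ i : {i : Fin n // b ≤ i.val ∧ ¬ i.val < k}, Fin (d i.1)) =>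
        φβ (fun j => if h : j.1.val < k then p.1 ⟨j.1, ⟨j.2, h⟩⟩ else p.2 ⟨j.1, ⟨j.2, h⟩⟩)) ≤ D)
    (K : Fin I → Matrix (∀ i : {i : Fin n // a ≤ i.val ∧ i.val < c}, Fin (d i.1))
                        (∀ i : {i : Fin n // a ≤ i.val ∧ i.val < c}, Fin (d i.1)) ℂ)
    (hK : ∑ i, (K i)ᴴ * K i = 1)
    (Ψ : ((∀ i : Fin n, Fin (d i)) × Fin I) → ℂ)
    (hΨ : ∀ (x : ∀ i : Fin n, Fin (d i)) (i : Fin I),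
      Ψ (x, i) = ∑ y : ∀ i : {i : Fin n // a ≤ i.val ∧ i.val < c}, Fin (d i.1),
        K i (fun j => x j.1) y *
        φα (fun j => if h : a ≤ j.1.val then y ⟨j.1, ⟨h, by have := j.2; omega⟩⟩ else x j.1) *
        φβ (fun j => if h : j.1.val < c then y ⟨j.1, ⟨by have := j.2; omega, h⟩⟩ else x j.1)) :
    (∀ k : ℕ, k ≤ b →
      schmidtRank (fun p : (∀ i : {i : Fin n // i.val < k}, Fin (d i.1)) ×
          ((∀ i : {i : Fin n // ¬ i.val < k}, Fin (d i.1)) × Fin I) =>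
        Ψ (fun j => if h : j.val < k then p.1 ⟨j, h⟩ else p.2.1 ⟨j, h⟩, p.2.2)) ≤
      D * (∏ i : {i : Fin n // a ≤ i.val ∧ i.val < b}, d i.1) *
        (∏ i : {i : Fin n // b ≤ i.val ∧ i.val < c}, d i.1) * I) ∧
    (∀ k : ℕ, b ≤ k → k ≤ n →
      schmidtRank (fun p : ((∀ i : {i : Fin n // i.val < k}, Fin (d i.1)) × Fin I) ×
          (∀ i : {i : Fin n // ¬ i.val < k}, Fin (d i.1)) =>
        Ψ (fun j => if h : j.val < k then p.1.1 ⟨j, h⟩ else p.2 ⟨j, h⟩, p.1.2)) ≤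
      D * (∏ i : {i : Fin n // a ≤ i.val ∧ i.val < b}, d i.1) *
        (∏ i : {i : Fin n // b ≤ i.val ∧ i.val < c}, d i.1) * I) := by
  constructor
  · intro k hkb
    by_cases hne : Nonempty ((∀ i : {i : Fin n // i.val < k}, Fin (d i.1)) ×
        ((∀ i : {i : Fin n // ¬ i.val < k}, Fin (d i.1)) × Fin I))
    swap
    · rw [schmidtRank_eq_zero _ (not_nonempty_iff.mp hne)]; exact Nat.zero_le _
    obtain ⟨⟨xL0, xR0, i0⟩⟩ := hne
    have hd : ∀ i : Fin n, ¬ i.val < k → 1 ≤ d i := fun i hi => (xR0 ⟨i, hi⟩).pos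
    have hI : 1 ≤ I := i0.pos
    obtain ⟨r, hrD, vα, wα, hdec⟩ := exists_decomp _
      (hφα (min a k) (le_trans (min_le_right a k) hkb))
    refine le_trans (schmidtRank_le_fintype _
      (ι := Fin r × (∀ i : {i : Fin n // a ≤ i.val ∧ i.val < k}, Fin (d i.1)))
      (fun tz xL => (if (fun i : {i : Fin n // a ≤ i.val ∧ i.val < k} => xL ⟨i.1, i.2.2⟩) = tz.2
          then (1:ℂ) else 0) *
        vα tz.1 (fun j => xL ⟨j.1, lt_of_lt_of_le j.2 (min_le_right a k)⟩))
      (fun tz q => ∑ y : ∀ i : {i : Fin n // a ≤ i.val ∧ i.val < c}, Fin (d i.1),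
        K q.2 (fun j => if h : j.1.val < k then tz.2 ⟨j.1, ⟨j.2.1, h⟩⟩
            else q.1 ⟨j.1, h⟩) y *
        wα tz.1 (fun j => if h : a ≤ j.1.val then y ⟨j.1, ⟨h, by have := j.2.1; omega⟩⟩
            else q.1 ⟨j.1, by have := j.2.2; omega⟩) *
        φβ (fun j => if h : j.1.val < c then y ⟨j.1, ⟨by have := j.2; omega, h⟩⟩
            else q.1 ⟨j.1, by have := j.2; omega⟩))
      ?_) ?_
    · rintro ⟨xL, xR, i⟩
      simp only [hΨ, Fintype.sum_prod_type, ite_mul, one_mul, zero_mul,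
        Finset.sum_ite_eq, Finset.mem_univ, if_true]
      have eB : ∀ y : (∀ i : {i : Fin n // a ≤ i.val ∧ i.val < c}, Fin (d i.1)),
          (fun j : {i : Fin n // b ≤ i.val} =>
            if h : j.1.val < c then y ⟨j.1, ⟨by have := j.2; omega, h⟩⟩
            else if h' : j.1.val < k then xL ⟨j.1, h'⟩ else xR ⟨j.1, h'⟩)
          = fun j : {i : Fin n // b ≤ i.val} =>
            if h : j.1.val < c then y ⟨j.1, ⟨by have := j.2; omega, h⟩⟩
            else xR ⟨j.1, by have := j.2; omega⟩ := fun y => funext fun j => by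
          have := j.2; split_ifs <;> first | rfl | (exfalso; omega)
      have key : ∀ y : (∀ i : {i : Fin n // a ≤ i.val ∧ i.val < c}, Fin (d i.1)),
          (φα fun j => if h : a ≤ j.1.val then y ⟨j.1, ⟨h, by have := j.2; omega⟩⟩
            else if h' : j.1.val < k then xL ⟨j.1, h'⟩ else xR ⟨j.1, h'⟩)
          = ∑ t : Fin r, vα t (fun j => xL ⟨j.1, lt_of_lt_of_le j.2 (min_le_right a k)⟩) *
              wα t (fun j => if h : a ≤ j.1.val then y ⟨j.1, ⟨h, by have := j.2.1; omega⟩⟩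
                else xR ⟨j.1, by have := j.2.2; omega⟩) := by
        intro y
        refine Eq.trans (congrArg φα ?_)
          (hdec ⟨fun j => xL ⟨j.1, lt_of_lt_of_le j.2 (min_le_right a k)⟩,
            fun j => if h : a ≤ j.1.val then y ⟨j.1, ⟨h, by have := j.2.1; omega⟩⟩
              else xR ⟨j.1, by have := j.2.2; omega⟩⟩)
        funext j
        have hj := j.2
        dsimp only
        split_ifs <;> first | rfl | (exfalso; omega)
      simp only [eB, key, Finset.mul_sum, Finset.sum_mul]
      rw [Finset.sum_comm]
      exact Finset.sum_congr rfl fun t _ => Finset.sum_congr rfl fun y _ => by ring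
    · rw [Fintype.card_prod, Fintype.card_fin, Fintype.card_pi]
      simp only [Fintype.card_fin]
      have hZA : (∏ i : {i : Fin n // a ≤ i.val ∧ i.val < k}, d i.1) ≤
          ∏ i : {i : Fin n // a ≤ i.val ∧ i.val < b}, d i.1 := by
        rw [← Finset.prod_subtype (Finset.univ.filter fun i : Fin n => a ≤ i.val ∧ i.val < k)
              (fun i => by simp) (fun i => d i),
            ← Finset.prod_subtype (Finset.univ.filter fun i : Fin n => a ≤ i.val ∧ i.val < b)
              (fun i => by simp) (fun i => d i)]
        refine Finset.prod_le_prod_of_subset_of_one_le' (fun i hi => ?_) (fun i hi1 hi2 => ?_)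
        · simp only [Finset.mem_filter, Finset.mem_univ, true_and] at *; omega
        · simp only [Finset.mem_filter, Finset.mem_univ, true_and] at hi1 hi2
          exact hd i (by omega)
      have hB1 : 1 ≤ ∏ i : {i : Fin n // b ≤ i.val ∧ i.val < c}, d i.1 :=
        Finset.one_le_prod' fun i _ => hd i.1 (by have := i.2.1; omega)
      calc r * ∏ i : {i : Fin n // a ≤ i.val ∧ i.val < k}, d i.1
          ≤ D * ∏ i : {i : Fin n // a ≤ i.val ∧ i.val < b}, d i.1 := Nat.mul_le_mul hrD hZA
        _ ≤ (D * ∏ i : {i : Fin n // a ≤ i.val ∧ i.val < b}, d i.1) *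
            ((∏ i : {i : Fin n // b ≤ i.val ∧ i.val < c}, d i.1) * I) :=
          Nat.le_mul_of_pos_right _ (Nat.mul_pos hB1 hI)
        _ = D * (∏ i : {i : Fin n // a ≤ i.val ∧ i.val < b}, d i.1) *
            (∏ i : {i : Fin n // b ≤ i.val ∧ i.val < c}, d i.1) * I := by ring
  · intro k hbk hkn
    by_cases hne : Nonempty (((∀ i : {i : Fin n // i.val < k}, Fin (d i.1)) × Fin I) ×
        (∀ i : {i : Fin n // ¬ i.val < k}, Fin (d i.1)))
    swap
    · rw [schmidtRank_eq_zero _ (not_nonempty_iff.mp hne)]; exact Nat.zero_le _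
    obtain ⟨⟨xL0, i0⟩, xR0⟩ := hne
    have hd : ∀ i : Fin n, i.val < k → 1 ≤ d i := fun i hi => (xL0 ⟨i, hi⟩).pos
    have hI : 1 ≤ I := i0.pos
    obtain ⟨r, hrD, vβ, wβ, hdec⟩ := exists_decomp _
      (hφβ (max k c) (le_trans hbc (le_max_right k c)) (max_le hkn hcn))
    refine le_trans (schmidtRank_le_fintype _
      (ι := Fin r × (∀ i : {i : Fin n // k ≤ i.val ∧ i.val < c}, Fin (d i.1)))
      (fun tz q => ∑ y : ∀ i : {i : Fin n // a ≤ i.val ∧ i.val < c}, Fin (d i.1),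
        K q.2 (fun j => if h : j.1.val < k then q.1 ⟨j.1, h⟩
            else tz.2 ⟨j.1, ⟨by omega, j.2.2⟩⟩) y *
        φα (fun j => if h : a ≤ j.1.val then y ⟨j.1, ⟨h, by have := j.2; omega⟩⟩
            else q.1 ⟨j.1, by have := j.2; omega⟩) *
        vβ tz.1 (fun j => if h : j.1.val < c then y ⟨j.1, ⟨by have := j.2.1; omega, h⟩⟩
            else q.1 ⟨j.1, by have := j.2.2; omega⟩))
      (fun tz xR => (if (fun i : {i : Fin n // k ≤ i.val ∧ i.val < c} =>
            xR ⟨i.1, by have := i.2.1; omega⟩) = tz.2 then (1:ℂ) else 0) *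
        wβ tz.1 (fun j => xR ⟨j.1, by have := j.2.2; omega⟩))
      ?_) ?_
    · rintro ⟨⟨xL, i⟩, xR⟩
      simp only [hΨ, Fintype.sum_prod_type, ite_mul, mul_ite, one_mul, zero_mul, mul_one,
        mul_zero, Finset.sum_ite_eq, Finset.mem_univ, if_true]
      have eA : ∀ y : (∀ i : {i : Fin n // a ≤ i.val ∧ i.val < c}, Fin (d i.1)),
          (fun j : {i : Fin n // i.val < b} =>
            if h : a ≤ j.1.val then y ⟨j.1, ⟨h, by have := j.2; omega⟩⟩
            else if h' : j.1.val < k then xL ⟨j.1, h'⟩ else xR ⟨j.1, h'⟩)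
          = fun j : {i : Fin n // i.val < b} =>
            if h : a ≤ j.1.val then y ⟨j.1, ⟨h, by have := j.2; omega⟩⟩
            else xL ⟨j.1, by have := j.2; omega⟩ := fun y => funext fun j => by
          have := j.2; split_ifs <;> first | rfl | (exfalso; omega)
      have key : ∀ y : (∀ i : {i : Fin n // a ≤ i.val ∧ i.val < c}, Fin (d i.1)),
          (φβ fun j => if h : j.1.val < c then y ⟨j.1, ⟨by have := j.2; omega, h⟩⟩
            else if h' : j.1.val < k then xL ⟨j.1, h'⟩ else xR ⟨j.1, h'⟩)
          = ∑ t : Fin r, vβ t (fun j => if h : j.1.val < c then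
                y ⟨j.1, ⟨by have := j.2.1; omega, h⟩⟩
                else xL ⟨j.1, by have := j.2.2; omega⟩) *
              wβ t (fun j => xR ⟨j.1, by have := j.2.2; omega⟩) := by
        intro y
        refine Eq.trans (congrArg φβ ?_)
          (hdec ⟨fun j => if h : j.1.val < c then y ⟨j.1, ⟨by have := j.2.1; omega, h⟩⟩
              else xL ⟨j.1, by have := j.2.2; omega⟩,
            fun j => xR ⟨j.1, by have := j.2.2; omega⟩⟩)
        funext j
        have hj := j.2
        dsimp only
        split_ifs <;> first | rfl | (exfalso; omega)
      simp only [eA, key, Finset.mul_sum, Finset.sum_mul]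
      rw [Finset.sum_comm]
      exact Finset.sum_congr rfl fun t _ => Finset.sum_congr rfl fun y _ => by ring
    · rw [Fintype.card_prod, Fintype.card_fin, Fintype.card_pi]
      simp only [Fintype.card_fin]
      have hZB : (∏ i : {i : Fin n // k ≤ i.val ∧ i.val < c}, d i.1) ≤
          ∏ i : {i : Fin n // b ≤ i.val ∧ i.val < c}, d i.1 := by
        rw [← Finset.prod_subtype (Finset.univ.filter fun i : Fin n => k ≤ i.val ∧ i.val < c)
              (fun i => by simp) (fun i => d i),
            ← Finset.prod_subtype (Finset.univ.filter fun i : Fin n => b ≤ i.val ∧ i.val < c)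
              (fun i => by simp) (fun i => d i)]
        refine Finset.prod_le_prod_of_subset_of_one_le' (fun i hi => ?_) (fun i hi1 hi2 => ?_)
        · simp only [Finset.mem_filter, Finset.mem_univ, true_and] at *; omega
        · simp only [Finset.mem_filter, Finset.mem_univ, true_and] at hi1 hi2
          exact hd i (by omega)
      have hA1 : 1 ≤ ∏ i : {i : Fin n // a ≤ i.val ∧ i.val < b}, d i.1 :=
        Finset.one_le_prod' fun i _ => hd i.1 (by have := i.2.2; omega)
      calc r * ∏ i : {i : Fin n // k ≤ i.val ∧ i.val < c}, d i.1
          ≤ D * ∏ i : {i : Fin n // b ≤ i.val ∧ i.val < c}, d i.1 := Nat.mul_le_mul hrD hZB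
        _ ≤ ((∏ i : {i : Fin n // a ≤ i.val ∧ i.val < b}, d i.1) * I) *
            (D * ∏ i : {i : Fin n // b ≤ i.val ∧ i.val < c}, d i.1) :=
          Nat.le_mul_of_pos_left _ (Nat.mul_pos hA1 hI)
        _ = D * (∏ i : {i : Fin n // a ≤ i.val ∧ i.val < b}, d i.1) *
            (∏ i : {i : Fin n // b ≤ i.val ∧ i.val < c}, d i.1) * I := by ring
end

section
/- Let H_{α₂}, H_{α₁}, H_{β₁}, H_{β₂} be finite-dimensional complex Hilbert spaces, φ_α ∈ H_{α₂} ⊗ H_{α₁}, φ_β ∈ H_{β₁} ⊗ H_{β₂}, and let K₁, …, K_I be linear operators on H_{α₁} ⊗ H_{β₁}. Set H_γ := ℂ^I with standard basis (e_i), and define Ψ := Σ_{i=1}^{I} τ(((1_{α₂} ⊗ K_i ⊗ 1_{β₂})(σ(φ_α ⊗ φ_β))) ⊗ e_i), where σ is the canonical reordering into H_{α₂} ⊗ (H_{α₁} ⊗ H_{β₁}) ⊗ H_{β₂} and τ reorders into (H_{α₂} ⊗ H_{α₁}) ⊗ (H_γ ⊗ H_{β₁} ⊗ H_{β₂}). Then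 the Schmidt rank of Ψ, regarded as an element of (H_{α₂} ⊗ H_{α₁}) ⊗ (H_γ ⊗ H_{β₁} ⊗ H_{β₂}), is at most I · dim(H_{α₁}) · dim(H_{β₁}). -/
/-- If `x` admits a decomposition into simple tensors indexed by a fintype `κ`,
then its Schmidt rank is at most the cardinality of `κ`. -/
lemma schmidtRank_le_card {α β κ : Type*} [Fintype κ] (x : α × β → ℂ)
    (v : κ → α → ℂ) (w : κ → β → ℂ)
    (h : ∀ p : α × β, x p = ∑ k, v k p.1 * w k p.2) :
    schmidtRank x ≤ Fintype.card κ := by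
  apply Nat.sInf_le
  refine ⟨fun k => v ((Fintype.equivFin κ).symm k), fun k => w ((Fintype.equivFin κ).symm k),
    fun p => ?_⟩
  rw [h p]
  exact Fintype.sum_equiv (Fintype.equivFin κ) _ _ (fun k => by simp)

/-- Hilbert spaces `H_{α₂}, H_{α₁}, H_{β₁}, H_{β₂}` are represented concretely as
`ℂ^{ια₂}` etc.; `φ_α ∈ H_{α₂} ⊗ H_{α₁}` and `φ_β ∈ H_{β₁} ⊗ H_{β₂}` by coordinate
functions; operators `Kᵢ` on `H_{α₁} ⊗ H_{β₁}` as matrices; `H_γ := ℂ^I`.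
The vector `Ψ := ∑ᵢ τ(((1_{α₂} ⊗ Kᵢ ⊗ 1_{β₂})(σ(φ_α ⊗ φ_β))) ⊗ eᵢ)`, regarded in
`(H_{α₂} ⊗ H_{α₁}) ⊗ (H_γ ⊗ H_{β₁} ⊗ H_{β₂})`, has the coordinates given below, and its
Schmidt rank is at most `I · dim H_{α₁} · dim H_{β₁}`. -/
theorem schmidtRank_stinespring_cut {ια₂ ια₁ ιβ₁ ιβ₂ : Type*}
    [Fintype ια₂] [Fintype ια₁] [Fintype ιβ₁] [Fintype ιβ₂] {I : ℕ}
    (φα : ια₂ × ια₁ → ℂ) (φβ : ιβ₁ × ιβ₂ → ℂ)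
    (K : Fin I → Matrix (ια₁ × ιβ₁) (ια₁ × ιβ₁) ℂ)
    (Ψ : (ια₂ × ια₁) × (Fin I × ιβ₁ × ιβ₂) → ℂ)
    (hΨ : ∀ a₂ a₁ i b₁ b₂, Ψ ((a₂, a₁), (i, b₁, b₂)) =
      ∑ a₁' : ια₁, ∑ b₁' : ιβ₁, K i (a₁, b₁) (a₁', b₁') * φα (a₂, a₁') * φβ (b₁', b₂)) :
    schmidtRank Ψ ≤ I * Fintype.card ια₁ * Fintype.card ιβ₁ := by
  classical
  rcases le_or_gt (Fintype.card ια₁) (Fintype.card ιβ₁) with hle | hlt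
  · -- use the decomposition indexed by `Fin I × ια₁ × ια₁`
    have key : schmidtRank Ψ ≤ Fintype.card (Fin I × ια₁ × ια₁) := by
      apply schmidtRank_le_card Ψ
        (fun k p => (if p.2 = k.2.1 then (1 : ℂ) else 0) * φα (p.1, k.2.2))
        (fun k q => (if q.1 = k.1 then (1 : ℂ) else 0) *
          ∑ b', K k.1 (k.2.1, q.2.1) (k.2.2, b') * φβ (b', q.2.2))
      rintro ⟨⟨a₂, a₁⟩, ⟨i, b₁, b₂⟩⟩
      rw [hΨ]
      symm
      simp only [Fintype.sum_prod_type]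
      rw [Finset.sum_eq_single i ?_ (by simp)]
      · rw [Finset.sum_eq_single a₁ ?_ (by simp)]
        · simp only [if_pos rfl, one_mul, Finset.mul_sum]
          exact Finset.sum_congr rfl fun a' _ => Finset.sum_congr rfl fun b' _ => by
            first | (simp; ring) | simp
        · intro a _ ha
          apply Finset.sum_eq_zero; intro a'' _
          rw [if_neg (Ne.symm ha)]; ring
      · intro j _ hj
        apply Finset.sum_eq_zero; intro a _
        apply Finset.sum_eq_zero; intro a'' _
        rw [if_neg (Ne.symm hj)]; ring
    calc schmidtRank Ψ ≤ _ := key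
      _ ≤ I * Fintype.card ια₁ * Fintype.card ιβ₁ := by
        simp only [Fintype.card_prod, Fintype.card_fin]
        rw [← mul_assoc]
        exact Nat.mul_le_mul_left _ hle
  · -- use the decomposition indexed by `Fin I × ιβ₁ × ιβ₁`
    have key : schmidtRank Ψ ≤ Fintype.card (Fin I × ιβ₁ × ιβ₁) := by
      apply schmidtRank_le_card Ψ
        (fun k p => ∑ a', K k.1 (p.2, k.2.1) (a', k.2.2) * φα (p.1, a'))
        (fun k q => (if q.1 = k.1 ∧ q.2.1 = k.2.1 then (1 : ℂ) else 0) * φβ (k.2.2, q.2.2))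
      rintro ⟨⟨a₂, a₁⟩, ⟨i, b₁, b₂⟩⟩
      rw [hΨ]
      symm
      simp only [Fintype.sum_prod_type]
      rw [Finset.sum_eq_single i ?_ (by simp)]
      · rw [Finset.sum_eq_single b₁ ?_ (by simp)]
        · simp only [if_pos (⟨rfl, rfl⟩ : i = i ∧ b₁ = b₁), one_mul, Finset.sum_mul]
          rw [Finset.sum_comm]
          exact Finset.sum_congr rfl fun a' _ => Finset.sum_congr rfl fun b' _ => by
            first | (simp; ring) | simp
        · intro b _ hb
          apply Finset.sum_eq_zero; intro b'' _
          rw [if_neg (by simp [Ne.symm hb])]; ring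
      · intro j _ hj
        apply Finset.sum_eq_zero; intro b _
        apply Finset.sum_eq_zero; intro b'' _
        rw [if_neg (by simp [Ne.symm hj])]; ring
    calc schmidtRank Ψ ≤ _ := key
      _ ≤ I * Fintype.card ια₁ * Fintype.card ιβ₁ := by
        simp only [Fintype.card_prod, Fintype.card_fin]
        rw [← mul_assoc]
        exact Nat.mul_le_mul_right _ (Nat.mul_le_mul_left _ hlt.le)
end

section
/- Non-lockability bound for the trace norm: let H_A and H_B be finite-dimensional complex Hilbert spaces and let Δ be a Hermitian matrix on H_A ⊗ H_B. Then ‖Δ‖₁ ≤ (dim H_B)² · sup{ |Tr[(X ⊗ Y) Δ]| : X a matrix on H_A with ‖X‖∞ ≤ 1, Y a matrix on H_B with ‖Y‖∞ ≤ 1 }. -/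
/-!
For Hermitian `Δ`, the sign matrix `Z = sgn Δ` (a function of `Δ` in the continuous functional
calculus) has operator norm at most `1` and satisfies `Z * Δ = |Δ|`, so `‖Δ‖₁ = Re Tr[Z Δ]`.
Splitting `Z = ∑ᵢⱼ Zᵢⱼ ⊗ |i⟩⟨j|` into its blocks over `H_B`, each block `Zᵢⱼ` is a compression
of `Z`, hence a contraction, and so is each matrix unit `|i⟩⟨j|`. Thus `Tr[Z Δ]` is a sum of
`(dim H_B)²` traces `Tr[(X ⊗ Y) Δ]` with contractions `X`, `Y`.
-/

open scoped ComplexOrder Matrix Kronecker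

/-- The trace norm `‖M‖₁ = Tr[√(Mᴴ M)]` of a square complex matrix
(the sum of its singular values). -/
noncomputable def traceNorm {ι : Type*} [Fintype ι] [DecidableEq ι] (M : Matrix ι ι ℂ) : ℝ :=
  (((Matrix.posSemidef_conjTranspose_mul_self M).1.eigenvectorUnitary.1 *
    (Matrix.diagonal ((↑) ∘ (√·) ∘ (Matrix.posSemidef_conjTranspose_mul_self M).1.eigenvalues) :
      Matrix ι ι ℂ) *
    (star (Matrix.posSemidef_conjTranspose_mul_self M).1.eigenvectorUnitary : Matrix ι ι ℂ)).trace).re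

/-- The operator norm `‖M‖∞` of a complex matrix: the largest singular value, i.e. the
operator norm of the induced map between Euclidean spaces. -/
noncomputable def opNorm {ι κ : Type*} [Fintype ι] [Fintype κ] [DecidableEq ι]
    (M : Matrix κ ι ℂ) : ℝ :=
  ‖LinearMap.toContinuousLinearMap (Matrix.toEuclideanLin M)‖

open scoped Matrix.Norms.L2Operator

theorem Continuous.matrix_kronecker {X R l m n p : Type*} [TopologicalSpace X]
    [TopologicalSpace R] [Mul R] [ContinuousMul R] {A : X → Matrix l m R} {B : X → Matrix n p R}
    (hA : Continuous A) (hB : Continuous B) : Continuous fun x => A x ⊗ₖ B x :=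
  continuous_matrix fun i j => (hA.matrix_elem i.1 j.1).mul (hB.matrix_elem i.2 j.2)

namespace Matrix

theorem sum_submatrix_kronecker_single {α m n : Type*} [Semiring α] [Fintype n] [DecidableEq n]
    (Z : Matrix (m × n) (m × n) α) :
    ∑ i, ∑ j, Z.submatrix (·, i) (·, j) ⊗ₖ single i j 1 = Z := by
  ext ⟨a, i⟩ ⟨b, j⟩
  simp [sum_apply, single_apply, ite_and, Finset.sum_ite_eq']

variable {𝕜 m n n' : Type*} [RCLike 𝕜] [Fintype m] [Fintype n] [Fintype n']
  [DecidableEq n] [DecidableEq n']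

lemma l2_opNorm_le_one_of_conjTranspose_mul_self_le_one {A : Matrix m n 𝕜}
    (h : ‖Aᴴ * A‖ ≤ 1) : ‖A‖ ≤ 1 := by
  rw [l2_opNorm_conjTranspose_mul_self] at h
  nlinarith [norm_nonneg A]

lemma l2_opNorm_one_le : ‖(1 : Matrix n n 𝕜)‖ ≤ 1 := by
  rw [← diagonal_one, l2_opNorm_diagonal]
  exact (pi_norm_le_iff_of_nonneg zero_le_one).2 fun _ => by simp

lemma l2_opNorm_one_submatrix_le {g : n' → n} (hg : Function.Injective g) :
    ‖(1 : Matrix n n 𝕜).submatrix id g‖ ≤ 1 := by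
  refine l2_opNorm_le_one_of_conjTranspose_mul_self_le_one ?_
  rw [conjTranspose_submatrix, conjTranspose_one, ← submatrix_mul _ _ _ _ _ Function.bijective_id,
    Matrix.mul_one, submatrix_one g hg]
  exact l2_opNorm_one_le

lemma l2_opNorm_submatrix_le {m' : Type*} [Fintype m'] [DecidableEq m] [DecidableEq m']
    (A : Matrix m n 𝕜) {f : m' → m} {g : n' → n} (hf : Function.Injective f) (hg : Function.Injective g) :
    ‖A.submatrix f g‖ ≤ ‖A‖ := by
  have hcompress : A.submatrix f g =
      ((1 : Matrix m m 𝕜).submatrix id f)ᴴ * A * (1 : Matrix n n 𝕜).submatrix id g := by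
    ext; simp [mul_apply, one_apply]
  rw [hcompress]
  calc _ ≤ ‖((1 : Matrix m m 𝕜).submatrix id f)ᴴ‖ * ‖A‖ * ‖(1 : Matrix n n 𝕜).submatrix id g‖ :=
        (l2_opNorm_mul _ _).trans (by gcongr; exact l2_opNorm_mul _ _)
    _ ≤ 1 * ‖A‖ * 1 := by
        rw [l2_opNorm_conjTranspose]
        gcongr
        exacts [l2_opNorm_one_submatrix_le hf, l2_opNorm_one_submatrix_le hg]
    _ = ‖A‖ := by ring

lemma l2_opNorm_single_one_le [DecidableEq m] (i : m) (j : n) : ‖single i j (1 : 𝕜)‖ ≤ 1 := by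
  refine l2_opNorm_le_one_of_conjTranspose_mul_self_le_one ?_
  rw [conjTranspose_single, star_one, single_mul_single_same, one_mul, ← diagonal_single,
    l2_opNorm_diagonal]
  exact (pi_norm_le_iff_of_nonneg zero_le_one).2 fun k => by
    rcases eq_or_ne k j with rfl | hk <;> simp [*]

end Matrix

lemma norm_cfc_sign_le_one {A : Type*} [CStarAlgebra A] (a : A) :
    ‖cfc (fun x : ℝ => (SignType.sign x : ℝ)) a‖ ≤ 1 :=
  norm_cfc_le zero_le_one fun x _ => by
    rcases lt_trichotomy x 0 with h | rfl | h <;> simp [*]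

section TraceNorm

variable {ι : Type*} [Fintype ι] [DecidableEq ι]

lemma traceNorm_eq_re_trace_cfc_sqrt (M : Matrix ι ι ℂ) :
    traceNorm M = (cfc Real.sqrt (Mᴴ * M)).trace.re := by
  rw [(Matrix.posSemidef_conjTranspose_mul_self M).1.cfc_eq, Matrix.IsHermitian.cfc,
    Unitary.conjStarAlgAut_apply]
  rfl

lemma Matrix.IsHermitian.traceNorm_eq_re_trace_cfc_abs {A : Matrix ι ι ℂ} (hA : A.IsHermitian) :
    traceNorm A = (cfc (fun x : ℝ => |x|) A).trace.re := by
  rw [traceNorm_eq_re_trace_cfc_sqrt, hA.eq, ← sq, ← cfc_comp_pow Real.sqrt 2 A]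
  simp only [Real.sqrt_sq_eq_abs]

lemma Matrix.IsHermitian.cfc_sign_mul_self {A : Matrix ι ι ℂ} (hA : A.IsHermitian) :
    cfc (fun x : ℝ => (SignType.sign x : ℝ)) A * A = cfc (fun x : ℝ => |x|) A := by
  have hcont (f : ℝ → ℝ) : ContinuousOn f (spectrum ℝ A) := A.finite_real_spectrum.continuousOn f
  calc _ = cfc (fun x : ℝ => (SignType.sign x : ℝ) * x) A := by
        rw [cfc_mul _ _ A (hcont _) (hcont _), cfc_id' ℝ A hA.isSelfAdjoint]
    _ = _ := by simp only [sign_mul_self]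

end TraceNorm

section Locking

variable {ιA ιB : Type*} [Fintype ιA] [Fintype ιB] [DecidableEq ιA] [DecidableEq ιB]

/-- Since `opNorm` is definitionally the norm of `Matrix.Norms.L2Operator`, this is the set whose
supremum appears in `traceNorm_le_locking`. -/
def productContractionTraces (Δ : Matrix (ιA × ιB) (ιA × ιB) ℂ) : Set ℝ :=
  {r : ℝ | ∃ (X : Matrix ιA ιA ℂ) (Y : Matrix ιB ιB ℂ),
    ‖X‖ ≤ 1 ∧ ‖Y‖ ≤ 1 ∧ r = ‖((X ⊗ₖ Y) * Δ).trace‖}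

lemma bddAbove_productContractionTraces (Δ : Matrix (ιA × ιB) (ιA × ιB) ℂ) :
    BddAbove (productContractionTraces Δ) := by
  have hK := (isCompact_closedBall (0 : Matrix ιA ιA ℂ) 1).prod
    (isCompact_closedBall (0 : Matrix ιB ιB ℂ) 1)
  have hf : Continuous fun XY : Matrix ιA ιA ℂ × Matrix ιB ιB ℂ =>
      ‖((XY.1 ⊗ₖ XY.2) * Δ).trace‖ :=
    ((continuous_fst.matrix_kronecker continuous_snd).matrix_mul continuous_const).matrix_trace.norm
  refine (hK.bddAbove_image hf.continuousOn).mono ?_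
  rintro r ⟨X, Y, hX, hY, rfl⟩
  exact ⟨(X, Y), ⟨by simpa using hX, by simpa using hY⟩, rfl⟩

lemma norm_trace_mul_le_card_sq_mul_sSup (Δ : Matrix (ιA × ιB) (ιA × ιB) ℂ)
    {Z : Matrix (ιA × ιB) (ιA × ιB) ℂ} (hZ : ‖Z‖ ≤ 1) :
    ‖(Z * Δ).trace‖ ≤ (Fintype.card ιB : ℝ) ^ 2 * sSup (productContractionTraces Δ) := by
  set S := productContractionTraces Δ
  have hmem (i j : ιB) :
      ‖((Z.submatrix (·, i) (·, j) ⊗ₖ Matrix.single i j 1) * Δ).trace‖ ∈ S :=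
    ⟨_, _, (Z.l2_opNorm_submatrix_le (Prod.mk_left_injective i)
      (Prod.mk_left_injective j)).trans hZ, Matrix.l2_opNorm_single_one_le i j, rfl⟩
  calc ‖(Z * Δ).trace‖
      = ‖∑ i, ∑ j, ((Z.submatrix (·, i) (·, j) ⊗ₖ Matrix.single i j 1) * Δ).trace‖ := by
        conv_lhs => rw [← Matrix.sum_submatrix_kronecker_single Z]
        simp only [Finset.sum_mul, Matrix.trace_sum]
    _ ≤ ∑ i, ∑ j, ‖((Z.submatrix (·, i) (·, j) ⊗ₖ Matrix.single i j 1) * Δ).trace‖ :=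
        (norm_sum_le _ _).trans (Finset.sum_le_sum fun i _ => norm_sum_le _ _)
    _ ≤ ∑ _i : ιB, ∑ _j : ιB, sSup S := by
        gcongr with i _ j _
        exact le_csSup (bddAbove_productContractionTraces Δ) (hmem i j)
    _ = (Fintype.card ιB : ℝ) ^ 2 * sSup S := by
        simp only [Finset.sum_const, Finset.card_univ, nsmul_eq_mul]
        ring

end Locking

/-- **Non-lockability bound for the trace norm**: for finite-dimensional complex Hilbert
spaces `H_A = ℂ^{ιA}`, `H_B = ℂ^{ιB}` and a Hermitian matrix `Δ` on `H_A ⊗ H_B`,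
`‖Δ‖₁ ≤ (dim H_B)² · sup { |Tr[(X ⊗ Y) Δ]| : ‖X‖∞ ≤ 1, ‖Y‖∞ ≤ 1 }`. -/
theorem traceNorm_le_locking {ιA ιB : Type*} [Fintype ιA] [Fintype ιB]
    [DecidableEq ιA] [DecidableEq ιB]
    (Δ : Matrix (ιA × ιB) (ιA × ιB) ℂ) (hΔ : Δ.IsHermitian) :
    traceNorm Δ ≤ (Fintype.card ιB : ℝ) ^ 2 *
      sSup {r : ℝ | ∃ (X : Matrix ιA ιA ℂ) (Y : Matrix ιB ιB ℂ),
        opNorm X ≤ 1 ∧ opNorm Y ≤ 1 ∧ r = ‖((X ⊗ₖ Y) * Δ).trace‖} := by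
  set Z := cfc (fun x : ℝ => (SignType.sign x : ℝ)) Δ
  calc traceNorm Δ = (Z * Δ).trace.re := by
        rw [hΔ.traceNorm_eq_re_trace_cfc_abs, hΔ.cfc_sign_mul_self]
    _ ≤ ‖(Z * Δ).trace‖ := Complex.re_le_norm _
    _ ≤ _ := norm_trace_mul_le_card_sq_mul_sSup Δ (norm_cfc_sign_le_one Δ)
end

section
/- Exact matrix product representation from bounded Schmidt ranks: let ψ ∈ (ℂ^d)^{⊗n} and D ≥ 1 be such that for every k ∈ {1, …, n−1}, the Schmidt rank of ψ regarded as an element of (ℂ^d)^{⊗k} ⊗ (ℂ^d)^{⊗(n−k)} is at most D. Then there exist matrices A^{(1)}_i ∈ ℂ^{1×D}, A^{(j)}_i ∈ ℂ^{D×D} for 2 ≤ j ≤ n−1, and A^{(n)}_i ∈ ℂ^{D×1} (for i = 1, …, d) such that the coefficient of ψ on the standard product basis vector indexed by (i₁, …, iₙ) equals the 1×1 matrix product A^{(1)}_{i₁} A^{(2)}_{i₂} ⋯ A^{(n)}_{iₙ} for all index tuples. -/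
/-- The vector `ψ ∈ (ℂ^d)^{⊗n}` (given by coordinates on `Fin n → Fin d`) regarded as an
element of `(ℂ^d)^{⊗k} ⊗ (ℂ^d)^{⊗(n−k)}`, i.e. split across the contiguous cut after the
first `k` sites. -/
def cutAt {d n : ℕ} (ψ : (Fin n → Fin d) → ℂ) (k : ℕ) :
    (({i : Fin n // i.val < k} → Fin d) × ({i : Fin n // ¬ i.val < k} → Fin d)) → ℂ :=
  fun p => ψ (fun i => if h : i.val < k then p.1 ⟨i, h⟩ else p.2 ⟨i, h⟩)

lemma schmidt_set_nonempty {α β : Type*} [Fintype β] [DecidableEq β] (x : α × β → ℂ) :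
    {r : ℕ | ∃ (v : Fin r → α → ℂ) (w : Fin r → β → ℂ),
      ∀ p : α × β, x p = ∑ k, v k p.1 * w k p.2}.Nonempty := by
  classical
  obtain ⟨e⟩ : Nonempty (Fin (Fintype.card β) ≃ β) :=
    ⟨(Fintype.equivFin β).symm⟩
  refine ⟨Fintype.card β, fun k a => x (a, e k), fun k b => if e k = b then 1 else 0, ?_⟩
  intro p
  simp only []
  have : ∀ k : Fin (Fintype.card β), x (p.1, e k) * (if e k = p.2 then 1 else 0)
      = (fun b => x (p.1, b) * if b = p.2 then 1 else 0) (e k) := fun k => rfl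
  rw [Finset.sum_congr rfl (fun k _ => this k),
    Equiv.sum_comp e (fun b => x (p.1, b) * if b = p.2 then 1 else 0)]
  simp [Finset.sum_ite_eq']

lemma schmidtRank_le {α β : Type*} {x : α × β → ℂ} {r : ℕ}
    (v : Fin r → α → ℂ) (w : Fin r → β → ℂ)
    (h : ∀ p : α × β, x p = ∑ k, v k p.1 * w k p.2) : schmidtRank x ≤ r :=
  Nat.sInf_le ⟨v, w, h⟩

lemma exists_min_decomp {α β : Type*} [Fintype β] [DecidableEq β] (x : α × β → ℂ) :
    ∃ (v : Fin (schmidtRank x) → α → ℂ) (w : Fin (schmidtRank x) → β → ℂ),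
      ∀ p : α × β, x p = ∑ k, v k p.1 * w k p.2 :=
  Nat.sInf_mem (schmidt_set_nonempty x)

lemma sum_pad {M : Type*} [AddCommMonoid M] {r D : ℕ} (h : r ≤ D) (f : Fin r → M) :
    ∑ b : Fin D, (if hb : b.val < r then f ⟨b, hb⟩ else 0) = ∑ b : Fin r, f b := by
  rw [Fin.sum_univ_eq_sum_range (fun i => if hb : i < r then f ⟨i, hb⟩ else 0) D]
  have : (∑ b : Fin r, f b) = ∑ i ∈ Finset.range r, if hb : i < r then f ⟨i, hb⟩ else 0 := by
    rw [← Fin.sum_univ_eq_sum_range (fun i => if hb : i < r then f ⟨i, hb⟩ else 0) r]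
    exact Finset.sum_congr rfl (fun b _ => by rw [dif_pos b.isLt])
  rw [this]
  exact (Finset.sum_subset (Finset.range_subset_range.2 h)
    (fun i _ hi => by rw [dif_neg (by simpa using hi)])).symm
lemma schmidtRank_le_of_factor {α β α' γ : Type*} [Fintype β] [DecidableEq β]
    (x : α × β → ℂ) (y : α' × γ → ℂ) (σ : α' → α) (Φ : γ → (β → ℂ) →ₗ[ℂ] ℂ)
    (h : ∀ p : α' × γ, y p = Φ p.2 (fun b => x (σ p.1, b))) :
    schmidtRank y ≤ schmidtRank x := by
  obtain ⟨v, w, hvw⟩ := exists_min_decomp x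
  refine schmidtRank_le (fun k a' => v k (σ a')) (fun k c => Φ c (w k)) ?_
  intro p
  rw [h p]
  have hx : (fun b => x (σ p.1, b)) = ∑ k, v k (σ p.1) • w k := by
    funext b
    simp [hvw (σ p.1, b), Finset.sum_apply]
  rw [hx, map_sum]
  simp [smul_eq_mul]

lemma exists_dual {β : Type*} [Fintype β] {r : ℕ} {w : Fin r → β → ℂ}
    (hw : LinearIndependent ℂ w) :
    ∃ L : (β → ℂ) →ₗ[ℂ] (Fin r → ℂ),
      ∀ c : Fin r → ℂ, L (fun b => ∑ k, c k * w k b) = c := by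
  classical
  let T : (Fin r → ℂ) →ₗ[ℂ] (β → ℂ) :=
    { toFun := fun c => ∑ k, c k • w k
      map_add' := by
        intro c c'; simp [add_smul, Finset.sum_add_distrib]
      map_smul' := by
        intro s c; simp [smul_smul, Finset.smul_sum] }
  have hker : LinearMap.ker T = ⊥ := by
    rw [LinearMap.ker_eq_bot']
    intro c hc
    have := Fintype.linearIndependent_iff.mp hw c hc
    funext k; exact this k
  obtain ⟨L, hL⟩ := LinearMap.exists_leftInverse_of_injective T hker
  refine ⟨L, fun c => ?_⟩
  have h1 : (fun b => ∑ k, c k * w k b) = T c := by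
    funext b; simp [T, Finset.sum_apply]
  rw [h1]
  have := congrArg (fun (f : (Fin r → ℂ) →ₗ[ℂ] (Fin r → ℂ)) => f c) hL
  simpa using this

lemma decomp_reduce {α β : Type*} (x : α × β → ℂ) {r' : ℕ}
    (v : Fin (r' + 1) → α → ℂ) (w : Fin (r' + 1) → β → ℂ)
    (hvw : ∀ p : α × β, x p = ∑ k, v k p.1 * w k p.2)
    (g : Fin (r' + 1) → ℂ) (hg0 : ∑ i, g i • w i = 0) (j : Fin (r' + 1)) (hgj : g j ≠ 0) :
    schmidtRank x ≤ r' := by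
  have hwj : ∀ b, w j b = ∑ k : Fin r', -(g (j.succAbove k) / g j) * w (j.succAbove k) b := by
    intro b
    have h0 := congrFun hg0 b
    simp only [Finset.sum_apply, Pi.smul_apply, smul_eq_mul, Pi.zero_apply] at h0
    rw [Fin.sum_univ_succAbove (fun i => g i * w i b) j] at h0
    have h3 : ∑ k : Fin r', -(g (j.succAbove k) / g j) * w (j.succAbove k) b
        = -(g j)⁻¹ * ∑ k : Fin r', g (j.succAbove k) * w (j.succAbove k) b := by
      rw [Finset.mul_sum]
      exact Finset.sum_congr rfl fun k _ => by ring
    rw [h3]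
    have h2 : ∑ k : Fin r', g (j.succAbove k) * w (j.succAbove k) b = -(g j * w j b) := by
      linear_combination h0
    rw [h2]
    field_simp
  refine schmidtRank_le
    (fun k a => v (j.succAbove k) a + -(g (j.succAbove k) / g j) * v j a)
    (fun k b => w (j.succAbove k) b) ?_
  intro p
  rw [hvw p, Fin.sum_univ_succAbove (fun i => v i p.1 * w i p.2) j, hwj p.2,
    Finset.mul_sum, ← Finset.sum_add_distrib]
  exact Finset.sum_congr rfl fun k _ => by ring

lemma min_decomp_indep {α β : Type*} [Fintype β] [DecidableEq β] (x : α × β → ℂ)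
    (v : Fin (schmidtRank x) → α → ℂ) (w : Fin (schmidtRank x) → β → ℂ)
    (hvw : ∀ p : α × β, x p = ∑ k, v k p.1 * w k p.2) :
    LinearIndependent ℂ w := by
  by_contra hdep
  obtain ⟨g, hg0, j, hgj⟩ := Fintype.not_linearIndependent_iff.mp hdep
  obtain ⟨r', hr⟩ : ∃ r', schmidtRank x = r' + 1 := by
    rcases h : schmidtRank x with _ | r'
    · rw [h] at j; exact j.elim0
    · exact ⟨r', rfl⟩
  have key : schmidtRank x ≤ r' := by
    refine decomp_reduce x (fun k => v (Fin.cast hr.symm k)) (fun k => w (Fin.cast hr.symm k))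
      ?_ (fun k => g (Fin.cast hr.symm k)) ?_ (Fin.cast hr j) (by simpa using hgj)
    · intro p
      rw [hvw p]
      exact (Equiv.sum_comp (finCongr hr.symm)
        (fun k => v k p.1 * w k p.2)).symm
    · rw [← hg0]
      exact Equiv.sum_comp (finCongr hr.symm) (fun k => g k • w k)
  omega

def cutB {d m D : ℕ} (χ : ((Fin m → Fin d) × Fin D) → ℂ) (k : ℕ) :
    (({i : Fin m // i.val < k} → Fin d) ×
      (({i : Fin m // ¬ i.val < k} → Fin d) × Fin D)) → ℂ :=
  fun p => χ (fun i => if h : i.val < k then p.1 ⟨i, h⟩ else p.2.1 ⟨i, h⟩, p.2.2)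

lemma mps_claim {d D : ℕ} (hD : 0 < D) :
    ∀ m : ℕ, 1 ≤ m → ∀ χ : ((Fin m → Fin d) × Fin D) → ℂ,
      (∀ k : ℕ, 1 ≤ k → k < m → schmidtRank (cutB χ k) ≤ D) →
      ∃ B : Fin m → Fin d → Matrix (Fin D) (Fin D) ℂ,
        ∀ (x : Fin m → Fin d) (a : Fin D),
          χ (x, a) = (((List.finRange m).map (fun j => B j (x j))).prod) ⟨0, hD⟩ a := by
  intro m
  induction m with
  | zero => omega
  | succ m ih =>
    intro _ χ hχ
    rcases Nat.eq_zero_or_pos m with hm | hm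
    · subst hm
      refine ⟨fun _ i => Matrix.of (fun b a => if b = ⟨0, hD⟩ then χ (fun _ => i, a) else 0),
        ?_⟩
      intro x a
      have hx : (fun _ => x 0) = x := by
        funext i
        have : i = 0 := Fin.ext (Nat.lt_one_iff.mp i.isLt)
        rw [this]
      simp [List.finRange_succ, hx]
    · -- inductive step
      obtain ⟨v, w, hvw⟩ := exists_min_decomp (cutB χ m)
      have hw : LinearIndependent ℂ w := min_decomp_indep _ v w hvw
      obtain ⟨L, hL⟩ := exists_dual hw
      have hrD : schmidtRank (cutB χ m) ≤ D := hχ m hm (by omega)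
      clear hw
      generalize hgen : schmidtRank (cutB χ m) = r at hrD v w hvw L hL
      -- identity I : recovering left factors via the dual map
      have hI : ∀ z : {i : Fin (m + 1) // i.val < m} → Fin d,
          (fun k => v k z) = L (fun q => cutB χ m (z, q)) := by
        intro z
        have h1 : (fun q => cutB χ m (z, q)) = fun q => ∑ k, v k z * w k q := by
          funext q; exact hvw (z, q)
        rw [h1, hL (fun k => v k z)]
      -- the reduced tensor and padded last-site factors
      set χ' : ((Fin m → Fin d) × Fin D) → ℂ :=
        fun p => if h : p.2.val < r then
          v ⟨p.2.val, h⟩ (fun i => p.1 ⟨i.1.val, i.2⟩) else 0 with hχ'def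
      set wp : Fin D → Fin d × Fin D → ℂ :=
        fun b q => if h : b.val < r then
          w ⟨b.val, h⟩ (fun _ => q.1, q.2) else 0 with hwpdef
      -- identity II : χ = ∑ χ' ⊗ wp
      have hII : ∀ (x : Fin (m + 1) → Fin d) (a : Fin D),
          χ (x, a) = ∑ b : Fin D,
            χ' (fun t => x t.castSucc, b) * wp b (x (Fin.last m), a) := by
        intro x a
        have h1 : cutB χ m (fun i => x i.1, (fun i => x i.1, a)) = χ (x, a) := by
          simp only [cutB]
          congr 1
          refine Prod.ext ?_ rfl
          funext i
          by_cases h : i.val < m <;> simp [h]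
        rw [← h1, hvw ((fun i => x i.1), ((fun i => x i.1), a)),
          ← sum_pad hrD (fun k => v k (fun i => x i.1) * w k ((fun i => x i.1), a))]
        refine Finset.sum_congr rfl fun b _ => ?_
        rw [hχ'def, hwpdef]
        dsimp only
        by_cases h : b.val < r
        · rw [dif_pos h, dif_pos h, dif_pos h]
          refine congrArg₂ (· * ·) ?_ ?_
          · exact congrArg (v ⟨b.val, h⟩) (funext fun i => congrArg x (Fin.ext rfl))
          · exact congrArg (w ⟨b.val, h⟩) (Prod.ext (funext fun i => congrArg x (Fin.ext (by
              have h2 := i.2; have h3 := i.1.isLt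
              simp only [Fin.val_last]; omega))) rfl)
        · rw [dif_neg h, dif_neg h, dif_neg h, mul_zero]
      -- Schmidt rank bounds for the reduced tensor
      have hb' : ∀ k : ℕ, 1 ≤ k → k < m → schmidtRank (cutB χ' k) ≤ D := by
        intro k hk1 hkm
        refine le_trans ?_ (hχ k hk1 (by omega))
        refine schmidtRank_le_of_factor (cutB χ k) (cutB χ' k)
          (fun z i => z ⟨⟨i.1.val, lt_trans i.2 hkm⟩, i.2⟩)
          (fun c => if h : c.2.val < r then
            (LinearMap.proj (⟨c.2.val, h⟩ : Fin r)).comp (L.comp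
              (LinearMap.funLeft ℂ ℂ (fun q =>
                (fun i => if h2 : i.1.val < m then c.1 ⟨⟨i.1.val, h2⟩, i.2⟩
                  else q.1 ⟨i.1, h2⟩, q.2)))) else 0)
          ?_
        rintro ⟨z, u, b⟩
        dsimp only
        simp only [cutB]
        rw [hχ'def]
        dsimp only
        by_cases h : b.val < r
        · rw [dif_pos h, dif_pos h]
          simp only [LinearMap.comp_apply, LinearMap.proj_apply]
          refine (congrFun (hI (fun i =>
            (fun t : Fin m => if ht : t.val < k then z ⟨t, ht⟩ else u ⟨t, ht⟩)
              ⟨i.1.val, i.2⟩)) ⟨b.val, h⟩).trans ?_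
          refine congrFun (congrArg (fun f => L f) (funext fun q => ?_)) ⟨b.val, h⟩
          simp only [LinearMap.funLeft_apply, cutB]
          refine congrArg χ (Prod.ext (funext fun i => ?_) rfl)
          by_cases h1 : i.val < k
          · have h2 : i.val < m := lt_trans h1 hkm
            simp [h1, h2]
          · by_cases h2 : i.val < m
            · simp [h1, h2]
            · simp [h1, h2]
        · rw [dif_neg h, dif_neg h]
          simp
      -- apply the induction hypothesis
      obtain ⟨B', hB'⟩ := ih hm χ' hb'
      refine ⟨fun j i => if h : j.val < m then B' ⟨j.val, h⟩ i
        else Matrix.of (fun b a => wp b (i, a)), ?_⟩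
      intro x a
      have hlast : ¬ (Fin.last m).val < m := by simp
      have hmid : (List.map (fun j : Fin m =>
            if h : (Fin.castSucc j).val < m then B' ⟨(Fin.castSucc j).val, h⟩ (x j.castSucc)
            else Matrix.of (fun b a => wp b (x j.castSucc, a))) (List.finRange m))
          = List.map (fun j : Fin m => B' j ((fun t => x t.castSucc) j)) (List.finRange m) := by
        refine List.map_congr_left ?_
        intro j _
        rw [dif_pos (by simpa using j.isLt)]
        rfl
      rw [hII x a, List.finRange_succ_last, List.map_append, List.prod_append, List.map_map]
      simp only [List.map_cons, List.map_nil, List.prod_cons, List.prod_nil, mul_one,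
        Function.comp_def, dif_neg hlast]
      rw [hmid, Matrix.mul_apply]
      refine Finset.sum_congr rfl fun b _ => ?_
      rw [← hB' (fun t => x t.castSucc) b]
      rfl

lemma finRange_split (m : ℕ) (p : Fin (m + 2) → Bool)
    (hp : ∀ j : Fin (m + 2), p j = decide (0 < j.val ∧ j.val < m + 1)) :
    List.finRange (m + 2) = (⟨0, by omega⟩ : Fin (m + 2)) ::
      ((List.finRange (m + 2)).filter p ++ [(⟨m + 1, by omega⟩ : Fin (m + 2))]) := by
  have hfil : (List.finRange (m + 2)).filter p
      = (List.finRange m).map (fun t => (⟨t.val + 1, by omega⟩ : Fin (m + 2))) := by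
    rw [List.finRange_succ_last, List.filter_append, List.filter_map]
    have h2 : List.filter p [Fin.last (m + 1)] = [] := by
      have : p (Fin.last (m + 1)) = false := by
        rw [hp]; exact decide_eq_false (by simp only [Fin.val_last]; omega)
      simp [List.filter, this]
    rw [h2, List.append_nil]
    rw [List.finRange_succ, List.filter_cons]
    have h3 : (p ∘ Fin.castSucc) (0 : Fin (m + 1)) = false := by
      simp only [Function.comp_apply]; rw [hp]; simp
    rw [h3]
    simp only [Bool.false_eq_true, if_neg, ite_false]
    rw [List.filter_map]
    have h4 : List.filter ((p ∘ Fin.castSucc) ∘ Fin.succ) (List.finRange m)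
        = List.finRange m := by
      refine List.filter_eq_self.mpr ?_
      intro t _
      simp only [Function.comp_apply]
      rw [hp]
      simp only [decide_eq_true_eq]
      refine ⟨by simp, ?_⟩
      simp only [Fin.coe_castSucc, Fin.val_succ]
      omega
    rw [h4, List.map_map]
    refine List.map_congr_left ?_
    intro t _
    exact Fin.ext rfl
  rw [hfil, List.finRange_succ_last, List.finRange_succ, List.map_cons, List.map_map,
    List.cons_append]
  refine congrArg₂ List.cons (Fin.ext ?_) (congrArg₂ (· ++ ·) ?_ ?_)
  · simp
  · refine List.map_congr_left fun t _ => Fin.ext ?_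
    simp
  · exact congrArg (fun a => [a]) (Fin.ext (by simp))

/-- **Exact matrix product representation from bounded Schmidt ranks**: if every contiguous
cut of `ψ ∈ (ℂ^d)^{⊗n}` has Schmidt rank at most `D`, then `ψ` admits an exact (open
boundary) matrix product representation with `1 × D` boundary matrix at the first site,
`D × D` matrices at the middle sites, and `D × 1` boundary matrix at the last site. -/
theorem exact_mps_from_schmidt_ranks {d n D : ℕ} (hn : 2 ≤ n) (hD : 1 ≤ D)
    (ψ : (Fin n → Fin d) → ℂ)
    (hψ : ∀ k : ℕ, 1 ≤ k → k ≤ n - 1 → schmidtRank (cutAt ψ k) ≤ D) :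
    ∃ (Afirst : Fin d → Matrix (Fin 1) (Fin D) ℂ)
      (Amid : Fin n → Fin d → Matrix (Fin D) (Fin D) ℂ)
      (Alast : Fin d → Matrix (Fin D) (Fin 1) ℂ),
      ∀ x : Fin n → Fin d,
        ψ x = (Afirst (x ⟨0, by omega⟩) *
          (((List.finRange n).filter (fun j => 0 < j.val ∧ j.val < n - 1)).map
            (fun j => Amid j (x j))).prod *
          Alast (x ⟨n - 1, by omega⟩)) 0 0 := by
  obtain ⟨m, rfl⟩ : ∃ m, n = m + 2 := ⟨n - 2, by omega⟩
  have hD' : 0 < D := hD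
  set χ : ((Fin (m + 2) → Fin d) × Fin D) → ℂ := fun p => ψ p.1 with hχdef
  have hcut : ∀ k : ℕ, 1 ≤ k → k < m + 2 → schmidtRank (cutB χ k) ≤ D := by
    intro k h1 h2
    refine le_trans (schmidtRank_le_of_factor (cutAt ψ k) (cutB χ k) id
      (fun c => LinearMap.proj c.1) ?_) (hψ k h1 (by omega))
    rintro ⟨z, u, b⟩
    rfl
  obtain ⟨B, hB⟩ := mps_claim hD' (m + 2) (by omega) χ hcut
  refine ⟨fun i => Matrix.of (fun _ a => B ⟨0, by omega⟩ i ⟨0, hD'⟩ a), B,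
    fun i => Matrix.of (fun b _ => B ⟨m + 1, by omega⟩ i b ⟨0, hD'⟩), ?_⟩
  intro x
  simp only [show (m + 2) - 1 = m + 1 from rfl]
  have h0 : ψ x = χ (x, ⟨0, hD'⟩) := rfl
  rw [h0, hB x ⟨0, hD'⟩]
  conv_lhs => rw [finRange_split m (fun j => decide (0 < j.val ∧ j.val < m + 1))
    (fun j => rfl)]
  rw [List.map_cons, List.map_append, List.prod_cons, List.prod_append,
    List.map_singleton, List.prod_singleton]
  simp only [Matrix.mul_apply, Matrix.of_apply, Finset.sum_mul, Finset.mul_sum]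
  rw [Finset.sum_comm]
  refine Finset.sum_congr rfl fun e _ => Finset.sum_congr rfl fun c _ => by ring
end
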